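/- arXiv:0911.4433 — 2 statements merged into one kernel-verified Lean document; each statement's English description precedes it below -/
import Mathlib

section
/- Let p > 3 be a prime. Then ∑_{k=1}^{p-1} H_k/k ≡ (p/3)·B_{p-3} (mod p²). -/
/-!
Write `S_n = ∑_{k<p} k ^ n`. Summing `H_k / k` symmetrically gives
`2 ∑ H_k / k = H_{p-1} ^ 2 + ∑ 1 / k ^ 2`. Here `H_{p-1} ≡ S_{p-2} ≡ 0 (mod p)`, and by Fermat
`1 / k ^ 2 ≡ 2 k ^ (p-3) - k ^ (2p-4) (mod p²)`, so `∑ 1 / k ^ 2 ≡ 2 S_{p-3} - S_{2p-4} (mod p²)`.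
Faulhaber's formula gives `S_n ≡ p B_n (mod p²)` for even `n`, and comparing `S_n` with the sum of
`(2k mod p) ^ n` (the doubling trick behind Kummer's congruence) gives
`3 S_{2p-4} ≡ 4 S_{p-3} (mod p²)`. Hence `2 ∑ H_k / k ≡ (2/3) S_{p-3} ≡ (2p/3) B_{p-3} (mod p²)`.
-/

open Finset

/-- The rationals of `p`-adic valuation at least `n`, i.e. `p ^ n ℤ_(p)`: a congruence modulo `p ^ n`
between `p`-integral rationals is membership of their difference. -/
def padicMultiples (p : ℕ) [Fact p.Prime] (n : ℕ) : AddSubgroup ℚ where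
  carrier := {x | padicNorm p x ≤ (p : ℚ) ^ (-(n : ℤ))}
  zero_mem' := by simp only [Set.mem_ofPred_eq, padicNorm.zero]; positivity
  add_mem' hx hy := padicNorm.nonarchimedean.trans (max_le hx hy)
  neg_mem' hx := by simpa only [Set.mem_ofPred_eq, padicNorm.neg] using hx

namespace padicMultiples

variable {p : ℕ} [hp : Fact p.Prime]

theorem mem_iff {n : ℕ} {x : ℚ} :
    x ∈ padicMultiples p n ↔ padicNorm p x ≤ (p : ℚ) ^ (-(n : ℤ)) := Iff.rfl

theorem intCast_mem_iff {n : ℕ} {z : ℤ} : (z : ℚ) ∈ padicMultiples p n ↔ (p : ℤ) ^ n ∣ z := by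
  rw [mem_iff, ← padicNorm.dvd_iff_norm_le, Nat.cast_pow]

theorem natCast_mem_zero (k : ℕ) : (k : ℚ) ∈ padicMultiples p 0 := by
  exact_mod_cast intCast_mem_iff.2 (by simp)

theorem pow_mem (n : ℕ) : (p : ℚ) ^ n ∈ padicMultiples p n := by
  exact_mod_cast intCast_mem_iff.2 (dvd_refl ((p : ℤ) ^ n))

theorem antitone : Antitone (padicMultiples p) := fun _ _ hab _ hx =>
  (mem_iff.1 hx).trans (zpow_le_zpow_right₀ (a := (p : ℚ))
    (by exact_mod_cast hp.out.one_lt.le) (by omega))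

theorem mul_mem {a b : ℕ} {x y : ℚ} (hx : x ∈ padicMultiples p a)
    (hy : y ∈ padicMultiples p b) : x * y ∈ padicMultiples p (a + b) := by
  rw [mem_iff, padicNorm.mul, Nat.cast_add, neg_add, zpow_add₀ (by exact_mod_cast hp.out.ne_zero)]
  exact mul_le_mul hx hy (padicNorm.nonneg _) (by positivity)

theorem div_natCast_mem {n u : ℕ} {x : ℚ} (hu : ¬ p ∣ u) (hx : x ∈ padicMultiples p n) :
    x / u ∈ padicMultiples p n := by
  rwa [mem_iff, padicNorm.div, (padicNorm.nat_eq_one_iff u).2 hu, div_one]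

theorem dvd_num {n : ℕ} {x : ℚ} (hx : x ∈ padicMultiples p n) : (p : ℤ) ^ n ∣ x.num := by
  have h := mul_mem hx (natCast_mem_zero x.den)
  rwa [Rat.mul_den_eq_num, intCast_mem_iff] at h

/-- Writing `t + 1 = p ^ v * u`, the bound `5 ^ v ≤ t + 1` leaves at least `k` factors of `p`. -/
theorem pow_div_succ_mem (hp5 : 5 ≤ p) {k t : ℕ} (hk : k ≤ 2) (hkt : k ≤ t) :
    (p : ℚ) ^ t / (t + 1 : ℕ) ∈ padicMultiples p k := by
  obtain ⟨v, u, hu, htu⟩ :=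
    Nat.exists_eq_pow_mul_and_not_dvd (by omega : t + 1 ≠ 0) p hp.out.one_lt.ne'
  have hv : k + v ≤ t := by
    rcases Nat.eq_zero_or_pos v with rfl | hv
    · omega
    · have hu0 : 0 < u := Nat.pos_of_ne_zero (by rintro rfl; simp at hu)
      have h1 : p ^ v ≤ t + 1 := htu ▸ Nat.le_mul_of_pos_right _ hu0
      have h2 : 5 ^ v ≤ p ^ v := Nat.pow_le_pow_left hp5 v
      have h3 : v - 1 < 5 ^ (v - 1) := Nat.lt_pow_self (by norm_num)
      have h4 : 5 ^ v = 5 * 5 ^ (v - 1) := by rw [← pow_succ', Nat.sub_add_cancel hv]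
      omega
  have hpow : (p : ℚ) ^ t / (t + 1 : ℕ) = (p : ℚ) ^ (t - v) / u := by
    rw [htu, Nat.cast_mul, Nat.cast_pow, pow_sub₀ _ (by exact_mod_cast hp.out.ne_zero) (by omega)]
    field_simp
  rw [hpow]
  exact div_natCast_mem hu (antitone (by omega) (pow_mem (t - v)))

end padicMultiples

open padicMultiples

def powerSum (N n : ℕ) : ℕ := ∑ k ∈ range N, k ^ n

theorem sum_range_pow_eq_sum_mul_bernoulli (N n : ℕ) :
    ∑ k ∈ range N, (k : ℚ) ^ n =
      ∑ i ∈ range (n + 1), N * bernoulli i * n.choose i * ((N : ℚ) ^ (n - i) / (n - i + 1 : ℕ)) := by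
  rw [sum_range_pow]
  refine sum_congr rfl fun i hi => ?_
  have hi : i ≤ n := Nat.lt_succ_iff.1 (mem_range.1 hi)
  have hchoose : (n.choose i : ℚ) * (n + 1) = (n + 1).choose i * (n - i + 1 : ℕ) := by
    rw [show n - i + 1 = n + 1 - i by omega]
    exact_mod_cast Nat.choose_mul_succ_eq n i
  rw [show n + 1 - i = n - i + 1 by omega, pow_succ]
  field_simp
  linear_combination -(N : ℚ) ^ (n - i) * N * bernoulli i * hchoose

theorem natCast_mul_bernoulli_eq (N n : ℕ) :
    (N : ℚ) * bernoulli n = powerSum N n -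
      ∑ i ∈ range n, N * bernoulli i * n.choose i * ((N : ℚ) ^ (n - i) / (n - i + 1 : ℕ)) := by
  rw [powerSum]
  push_cast
  rw [sum_range_pow_eq_sum_mul_bernoulli, sum_range_succ]
  simp

section Faulhaber

variable {p : ℕ} [Fact p.Prime]

theorem faulhaber_term_mem (hp5 : 5 ≤ p) {n i k : ℕ}
    (hB : (p : ℚ) * bernoulli i ∈ padicMultiples p 0) (hk : k ≤ 2) (hik : i + k ≤ n) :
    (p : ℚ) * bernoulli i * n.choose i * ((p : ℚ) ^ (n - i) / (n - i + 1 : ℕ))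
      ∈ padicMultiples p k := by
  simpa using mul_mem (mul_mem hB (natCast_mem_zero _)) (pow_div_succ_mem hp5 hk (by omega))

theorem natCast_mul_bernoulli_mem (hp5 : 5 ≤ p) (n : ℕ) :
    (p : ℚ) * bernoulli n ∈ padicMultiples p 0 := by
  induction n using Nat.strong_induction_on with
  | _ n ih =>
    rw [natCast_mul_bernoulli_eq]
    refine sub_mem (natCast_mem_zero _) (sum_mem fun i hi => ?_)
    have hi := mem_range.1 hi
    exact faulhaber_term_mem hp5 (ih i hi) (Nat.zero_le 2) (by omega)

theorem bernoulli_mem_zero_of_odd (hp2 : p ≠ 2) {n : ℕ} (hn : Odd n) :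
    bernoulli n ∈ padicMultiples p 0 := by
  rcases eq_or_ne n 1 with rfl | hn1
  · have h2 : ¬ p ∣ 2 := fun h => hp2 ((Nat.prime_dvd_prime_iff_eq Fact.out Nat.prime_two).1 h)
    rw [bernoulli_one, neg_div]
    exact neg_mem (by exact_mod_cast div_natCast_mem h2 (natCast_mem_zero 1))
  · rw [bernoulli_eq_zero_of_odd hn (by rcases hn with ⟨k, rfl⟩; omega)]
    exact zero_mem _

theorem powerSum_sub_mem_one (hp5 : 5 ≤ p) (n : ℕ) :
    (powerSum p n : ℚ) - p * bernoulli n ∈ padicMultiples p 1 := by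
  rw [natCast_mul_bernoulli_eq, sub_sub_cancel]
  refine sum_mem fun i hi => ?_
  have hi := mem_range.1 hi
  exact faulhaber_term_mem hp5 (natCast_mul_bernoulli_mem hp5 i) (by norm_num) (by omega)

theorem powerSum_sub_mem_two (hp5 : 5 ≤ p) {n : ℕ} (hn : Even n) (hn2 : 2 ≤ n) :
    (powerSum p n : ℚ) - p * bernoulli n ∈ padicMultiples p 2 := by
  obtain ⟨n, rfl⟩ : ∃ j, n = j + 1 := ⟨n - 1, by omega⟩
  rw [natCast_mul_bernoulli_eq, sub_sub_cancel, sum_range_succ]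
  refine add_mem (sum_mem fun i hi => ?_) ?_
  · have hi := mem_range.1 hi
    exact faulhaber_term_mem hp5 (natCast_mul_bernoulli_mem hp5 i) le_rfl (by omega)
  · have h2 : ¬ p ∣ 2 := fun h => by have := Nat.le_of_dvd two_pos h; omega
    have hB := bernoulli_mem_zero_of_odd (p := p) (by omega)
      (Nat.not_even_iff_odd.1 (Nat.even_add_one.1 hn))
    have h := div_natCast_mem h2 (mul_mem (mul_mem hB (natCast_mem_zero (n + 1))) (pow_mem 2))
    convert h using 1
    simp only [Nat.choose_succ_self_right, Nat.cast_add, Nat.cast_one, add_tsub_cancel_left,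
      pow_one, Nat.reduceAdd, Nat.cast_ofNat]
    ring

end Faulhaber

theorem sum_range_mul_mod {M : Type*} [AddCommMonoid M] {a N : ℕ} (ha : N.Coprime a)
    (f : ℕ → M) : ∑ k ∈ range N, f (a * k % N) = ∑ k ∈ range N, f k := by
  have hmaps : Set.MapsTo (fun k => a * k % N) (range N) (range N) := fun k hk =>
    mem_range.2 (Nat.mod_lt _ (Nat.zero_lt_of_lt (mem_range.1 hk)))
  have hinj : Set.InjOn (fun k => a * k % N) (range N) := fun x hx y hy h =>
    (Nat.ModEq.cancel_left_of_coprime ha h).eq_of_lt_of_lt (mem_range.1 hx) (mem_range.1 hy)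
  exact sum_nbij _ hmaps hinj (surjOn_of_injOn_of_card_le _ hmaps hinj le_rfl) fun _ _ => rfl

def doublingQuotientSum (N j : ℕ) : ℕ := ∑ k ∈ range N, k ^ j * (2 * k / N)

/-- `k ↦ 2k mod N` permutes `range N`, and `2k mod N = 2k - N ⌊2k/N⌋` is expanded to first order
in `N`. -/
theorem powerSum_modEq_doublingQuotientSum {N : ℕ} (hN : Odd N) (j : ℕ) :
    (2 ^ (j + 1) - 1) * (powerSum N (j + 1) : ℤ)
      ≡ (j + 1) * 2 ^ j * N * doublingQuotientSum N j [ZMOD N ^ 2] := by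
  have hperm : ∑ k ∈ range N, ((2 * k % N : ℕ) : ℤ) ^ (j + 1) = powerSum N (j + 1) := by
    rw [sum_range_mul_mod (Nat.coprime_two_right.2 hN) (fun r => (r : ℤ) ^ (j + 1)), powerSum]
    push_cast
    rfl
  have hterm : ∀ k, (N : ℤ) ^ 2 ∣ ((2 * k % N : ℕ) : ℤ) ^ (j + 1)
      - (2 * k : ℤ) ^ j * (-(N * (2 * k / N : ℕ))) * (j + 1) - (2 * k : ℤ) ^ (j + 1) := by
    intro k
    have hqr := Nat.mod_add_div (2 * k) N
    generalize 2 * k % N = r, 2 * k / N = q at *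
    rw [show (r : ℤ) = 2 * k + -(N * q) by omega]
    exact (Dvd.intro ((q : ℤ) ^ 2) (by ring)).trans (sq_dvd_add_pow_sub_sub _ _ _)
  refine Int.modEq_iff_dvd.2 ((dvd_sum fun k (_ : k ∈ range N) => hterm k).trans (dvd_of_eq ?_))
  rw [sum_sub_distrib, sum_sub_distrib, hperm]
  simp only [doublingQuotientSum, powerSum]
  push_cast
  simp only [mul_sum, ← sum_sub_distrib]
  exact sum_congr rfl fun k _ => by ring

theorem doublingQuotientSum_add_modEq {p : ℕ} [Fact p.Prime] {j : ℕ} (hj : 1 ≤ j) :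
    doublingQuotientSum p (j + (p - 1)) ≡ doublingQuotientSum p j [MOD p] := by
  rw [← ZMod.natCast_eq_natCast_iff, doublingQuotientSum, doublingQuotientSum]
  push_cast
  refine sum_congr rfl fun k _ => ?_
  rw [show j + (p - 1) = j - 1 + p by have := (Fact.out : p.Prime).one_lt; omega, pow_add,
    ZMod.pow_card, ← pow_succ, Nat.sub_add_cancel hj]

theorem three_mul_powerSum_modEq {p : ℕ} [hp : Fact p.Prime] (hp5 : 5 ≤ p) :
    3 * (powerSum p (2 * p - 4) : ℤ) ≡ 4 * powerSum p (p - 3) [ZMOD p ^ 2] := by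
  obtain ⟨m, rfl⟩ : ∃ m, p = m + 4 := ⟨p - 4, by omega⟩
  have hodd : Odd (m + 4) := hp.out.odd_of_ne_two (by omega)
  obtain ⟨c₁, hc₁⟩ := (powerSum_modEq_doublingQuotientSum hodd m).dvd
  obtain ⟨c₂, hc₂⟩ := (powerSum_modEq_doublingQuotientSum hodd (2 * m + 3)).dvd
  obtain ⟨w, hw⟩ :=
    Nat.modEq_iff_dvd.1 (doublingQuotientSum_add_modEq (p := m + 4) (j := m) (by omega))
  have h8 : ((m + 4 : ℕ) : ℤ) ∣ 2 ^ (m + 3) - 1 :=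
    Int.prime_dvd_pow_sub_one hp.out (Nat.isCoprime_iff_coprime.2 (Nat.coprime_two_left.2 hodd))
  -- Since `8 * 2 ^ m ≡ 1`, four times either factor is `≡ -3`.
  have hcop : IsCoprime ((m + 4 : ℕ) : ℤ) ((2 * 2 ^ m - 1) * (16 * (2 ^ m) ^ 2 - 1)) := by
    have hP := Nat.prime_iff_prime_int.mp hp.out
    refine hP.coprime_iff_not_dvd.2 fun h => ?_
    have h3 : ((m + 4 : ℕ) : ℤ) ∣ 3 := by
      rcases hP.dvd_or_dvd h with h | h
      · exact (dvd_sub h8 (h.mul_left 4)).trans (dvd_of_eq (by ring))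
      · exact (dvd_sub (h8.mul_right (2 ^ (m + 3) + 1)) (h.mul_left 4)).trans
          (dvd_of_eq (by ring))
    have := Int.le_of_dvd (by norm_num) h3
    omega
  obtain ⟨e, he⟩ := h8
  rw [show 2 * (m + 4) - 4 = 2 * m + 3 + 1 by omega, show m + 4 - 3 = m + 1 by omega,
    Int.modEq_iff_dvd]
  rw [show m + (m + 4 - 1) = 2 * m + 3 by omega] at hw
  push_cast at *
  -- Eliminate the two doubling sums between `hc₁` and `hc₂` after multiplying by the unit.
  refine (hcop.pow_left (m := 2)).dvd_of_dvd_mul_right ⟨3 * (2 * 2 ^ m - 1) * c₂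
    - 4 * (16 * (2 ^ m) ^ 2 - 1) * c₁ + 24 * (2 * m + 4) * (2 ^ m) ^ 2 * (2 * 2 ^ m - 1) * w
    - doublingQuotientSum (m + 4) m * (12 * 2 ^ m * e + 48 * (2 ^ m) ^ 2 * (2 * 2 ^ m - 1)
      - 4 * 2 ^ m * (16 * (2 ^ m) ^ 2 - 1)), ?_⟩
  linear_combination 3 * (2 * 2 ^ m - 1) * hc₂ - 4 * (16 * (2 ^ m) ^ 2 - 1) * hc₁
    + 24 * (2 * m + 4) * (m + 4) * (2 ^ m) ^ 2 * (2 * 2 ^ m - 1) * hw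
    - 12 * 2 ^ m * (m + 4) * doublingQuotientSum (m + 4) m * he

theorem powerSum_eq_sum_Icc (N : ℕ) {n : ℕ} (hn : n ≠ 0) :
    (powerSum N n : ℚ) = ∑ k ∈ Icc 1 (N - 1), (k : ℚ) ^ n := by
  rcases Nat.eq_zero_or_pos N with rfl | hN
  · simp [powerSum]
  rw [powerSum, Nat.cast_sum, range_eq_Ico, sum_eq_sum_Ico_succ_bot hN,
    ← Ico_add_one_right_eq_Icc, show N - 1 + 1 = N by omega]
  simp [hn]

theorem two_mul_sum_harmonic_div (n : ℕ) :
    2 * ∑ k ∈ Icc 1 n, (∑ j ∈ Icc 1 k, (1 : ℚ) / j) / k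
      = (∑ j ∈ Icc 1 n, (1 : ℚ) / j) ^ 2 + ∑ k ∈ Icc 1 n, 1 / (k : ℚ) ^ 2 := by
  induction n with
  | zero => simp
  | succ n ih =>
    simp only [sum_Icc_succ_top (Nat.le_add_left 1 n)]
    rw [← one_div_pow]
    linear_combination ih

theorem not_dvd_of_mem_Icc {p k : ℕ} (hk : k ∈ Icc 1 (p - 1)) : ¬ p ∣ k := fun h => by
  have hk := mem_Icc.1 hk
  have := Nat.le_of_dvd (by omega) h
  omega

section Harmonic

variable {p : ℕ} [hp : Fact p.Prime]

theorem pow_sub_one_sub_one_div_mem {k : ℕ} (hk : ¬ p ∣ k) :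
    ((k : ℚ) ^ (p - 1) - 1) / k ∈ padicMultiples p 1 := by
  have hcop : IsCoprime (k : ℤ) p :=
    Nat.isCoprime_iff_coprime.2 (hp.out.coprime_iff_not_dvd.2 hk).symm
  refine div_natCast_mem hk ?_
  exact_mod_cast intCast_mem_iff.2 ((pow_one (p : ℤ)).symm ▸ Int.prime_dvd_pow_sub_one hp.out hcop)

theorem sum_one_div_sub_powerSum_mem (hp5 : 5 ≤ p) :
    ∑ k ∈ Icc 1 (p - 1), (1 : ℚ) / k - powerSum p (p - 2) ∈ padicMultiples p 1 := by
  rw [powerSum_eq_sum_Icc p (by omega), ← sum_sub_distrib]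
  refine sum_mem fun k hk => ?_
  have hk0 : (k : ℚ) ≠ 0 := Nat.cast_ne_zero.2 (by have := mem_Icc.1 hk; omega)
  convert neg_mem (pow_sub_one_sub_one_div_mem (not_dvd_of_mem_Icc hk)) using 1
  rw [show p - 1 = p - 2 + 1 by omega, pow_succ]
  field_simp
  ring

theorem sum_one_div_mem (hp5 : 5 ≤ p) :
    ∑ k ∈ Icc 1 (p - 1), (1 : ℚ) / k ∈ padicMultiples p 1 := by
  have h := add_mem (sum_one_div_sub_powerSum_mem hp5) (powerSum_sub_mem_one hp5 (p - 2))
  have hodd : Odd (p - 2) := Nat.Odd.sub_even (by omega) (hp.out.odd_of_ne_two (by omega)) even_two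
  rwa [bernoulli_eq_zero_of_odd hodd (by omega), mul_zero, sub_zero, sub_add_cancel] at h

theorem sum_one_div_sq_sub_powerSum_mem (hp5 : 5 ≤ p) :
    ∑ k ∈ Icc 1 (p - 1), 1 / (k : ℚ) ^ 2 - 2 * (powerSum p (p - 3) : ℚ) + powerSum p (2 * p - 4)
      ∈ padicMultiples p 2 := by
  rw [powerSum_eq_sum_Icc p (by omega), powerSum_eq_sum_Icc p (by omega), mul_sum,
    ← sum_sub_distrib, ← sum_add_distrib]
  refine sum_mem fun k hk => ?_
  have hk0 : (k : ℚ) ≠ 0 := Nat.cast_ne_zero.2 (by have := mem_Icc.1 hk; omega)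
  have hq := pow_sub_one_sub_one_div_mem (not_dvd_of_mem_Icc hk)
  convert mul_mem hq hq using 1
  rw [show p - 1 = p - 3 + 2 by omega, show 2 * p - 4 = 2 * (p - 3) + 2 by omega, pow_add,
    pow_add, pow_mul]
  field_simp
  ring

end Harmonic

/-- For a prime `p > 3`,
`∑_{k=1}^{p-1} H_k/k ≡ (p/3)·B_{p-3} (mod p²)`. -/
theorem stmt_6 (p : ℕ) (hp : p.Prime) (hp3 : 3 < p) :
    (p : ℤ) ^ 2 ∣
      ((∑ k ∈ Finset.Icc 1 (p - 1),
          (∑ j ∈ Finset.Icc 1 k, (1 : ℚ) / j) / (k : ℚ))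
        - (p : ℚ) / 3 * bernoulli (p - 3)).num := by
  have := Fact.mk hp
  have hp5 : 5 ≤ p := by
    by_contra
    interval_cases p
    exact absurd hp (by decide)
  have hH := mul_mem (sum_one_div_mem hp5) (sum_one_div_mem hp5)
  have hD := sum_one_div_sq_sub_powerSum_mem hp5
  have hK := intCast_mem_iff.2 (three_mul_powerSum_modEq hp5).dvd
  have hS := powerSum_sub_mem_two hp5
    (Nat.Odd.sub_odd (hp.odd_of_ne_two (by omega)) (by decide : Odd 3)) (by omega)
  have h6 : ¬ p ∣ 2 * 3 := fun h => by
    rcases hp.dvd_mul.1 h with h | h <;> have := Nat.le_of_dvd (by norm_num) h <;> omega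
  apply dvd_num
  convert div_natCast_mem h6
    (add_mem (add_mem (add_mem (nsmul_mem hH 3) hK) (nsmul_mem hD 3)) (nsmul_mem hS 2)) using 1
  simp only [nsmul_eq_mul]
  push_cast
  linear_combination (1 / 2 : ℚ) * two_mul_sum_harmonic_div (p - 1)
end

section
/- Let p > 3 be a prime. Then ∑_{1 ≤ i ≤ j ≤ k ≤ p-1} (2^i − (−1)^i)/(i·j·k) ≡ ∑_{k=1}^{p-1} ((−1)^k − 2^k)/k³ (mod p). -/
/-!
Work in `ZMod p` and write `S_r(m) = ∑_{m ≤ j₁ ≤ ⋯ ≤ j_r ≤ p-1} 1/(j₁⋯j_r)`. Expanding `(1 - x)^k`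
binomially and absorbing `C(k, m)/k = C(k-1, m-1)/m` gives
`∑_k (1 - x)^k / k^(r+1) = ∑_m x^m/m · S_r(m)` once `∑_k C(k-1, m-1)/k^r = (-1)^m S_r(m)` for all
`m`. That formula follows by induction on `r` and `m` from Pascal's rule, `C(p-1, m) ≡ (-1)^m`
and the vanishing of the power sums `∑_k 1/k^d` for `0 < d < p - 1`; its case `m = 1` needs
`S_{r+1}(1) = 0`, which is the previous identity at `x = 1`. The triple sum equals
`∑_i x^i/i · S_2(i)`, so `r = 2` with `x = 2` and `x = -1` gives the congruence in `ZMod p`.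
All denominators are prime to `p`, and on such rationals reduction modulo `p` is a ring
homomorphism, which carries the congruence back to `ℚ`.
-/

open Finset

theorem Nat.sum_Icc_one_choose_pred (n m : ℕ) :
    ∑ k ∈ Icc 1 n, (k - 1).choose m = n.choose (m + 1) := by
  induction n with
  | zero => simp
  | succ n ih =>
    rw [sum_Icc_succ_top (by omega), ih, Nat.add_sub_cancel, Nat.choose_succ_succ', add_comm]

theorem Finset.sum_Icc_sum_Icc_comm {M : Type*} [AddCommMonoid M] (a n : ℕ) (f : ℕ → ℕ → M) :
    ∑ k ∈ Icc a n, ∑ j ∈ Icc a k, f j k = ∑ j ∈ Icc a n, ∑ k ∈ Icc j n, f j k :=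
  sum_comm' fun k j => by simp only [mem_Icc]; omega

theorem one_sub_pow_eq_sum_range {R : Type*} [CommRing R] (x : R) {k n : ℕ} (hk : k ≤ n) :
    (1 - x) ^ k = ∑ m ∈ range (n + 1), (-x) ^ m * k.choose m := by
  rw [sub_eq_neg_add, add_pow]
  refine sum_subset (range_subset_range.2 (by omega)) (fun m _ hm => ?_) |>.trans
    (sum_congr rfl fun m _ => by rw [one_pow, mul_one])
  rw [Nat.choose_eq_zero_of_lt (by simpa using hm), Nat.cast_zero, mul_zero]

theorem ZMod.natCast_ne_zero_of_dvd {n m k : ℕ} (hmk : m ∣ k) (hk : (k : ZMod n) ≠ 0) :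
    (m : ZMod n) ≠ 0 := by
  obtain ⟨c, rfl⟩ := hmk
  exact left_ne_zero_of_mul (by simpa using hk)

/-- `∑_{m ≤ j₁ ≤ ⋯ ≤ jᵣ ≤ p - 1} 1 / (j₁ ⋯ jᵣ)` in `ZMod p`. -/
def harmonicStarTail (p : ℕ) [Fact p.Prime] : ℕ → ℕ → ZMod p
  | 0, _ => 1
  | r + 1, m => ∑ j ∈ Icc m (p - 1), harmonicStarTail p r j / j

theorem harmonicStarTail_zero (p m : ℕ) [Fact p.Prime] : harmonicStarTail p 0 m = 1 := rfl

theorem harmonicStarTail_succ (p r m : ℕ) [Fact p.Prime] :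
    harmonicStarTail p (r + 1) m = ∑ j ∈ Icc m (p - 1), harmonicStarTail p r j / j := rfl

theorem harmonicStarTail_succ_of_le {p r m : ℕ} [Fact p.Prime] (hm : m ≤ p - 1) :
    harmonicStarTail p (r + 1) m =
      harmonicStarTail p r m / m + harmonicStarTail p (r + 1) (m + 1) := by
  rw [harmonicStarTail_succ, harmonicStarTail_succ, Icc_eq_cons_Ioc hm, sum_cons,
    Icc_add_one_left_eq_Ioc]

namespace ZMod

variable {p : ℕ} [Fact p.Prime]

theorem natCast_ne_zero_of_mem_Icc {k : ℕ} (hk : k ∈ Icc 1 (p - 1)) : (k : ZMod p) ≠ 0 := by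
  rw [Ne, natCast_eq_zero_iff]
  have := (Fact.out : p.Prime).pos
  exact Nat.not_dvd_of_pos_of_lt (mem_Icc.1 hk).1 (by have := (mem_Icc.1 hk).2; omega)

theorem sum_Icc_natCast_eq_sum_units {M : Type*} [AddCommMonoid M] (f : ZMod p → M) :
    ∑ k ∈ Icc 1 (p - 1), f k = ∑ u : (ZMod p)ˣ, f u :=
  sum_bij' (fun k hk => Units.mk0 (k : ZMod p) (natCast_ne_zero_of_mem_Icc hk))
    (fun u _ => (u : ZMod p).val) (fun _ _ => mem_univ _)
    (fun u _ => by
      have := (u : ZMod p).val_lt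
      have := (val_ne_zero (u : ZMod p)).2 u.ne_zero
      simp only [mem_Icc]; omega)
    (fun k hk => by
      have := (Fact.out : p.Prime).pos
      simp [val_cast_of_lt (by have := (mem_Icc.1 hk).2; omega : k < p)])
    (fun u _ => Units.ext (natCast_zmod_val _)) (fun _ _ => rfl)

theorem sum_Icc_inv_pow_eq_zero {d : ℕ} (hd0 : 0 < d) (hd : d < p - 1) :
    ∑ k ∈ Icc 1 (p - 1), ((k : ZMod p) ^ d)⁻¹ = 0 := by
  classical
  rw [sum_Icc_natCast_eq_sum_units fun x => (x ^ d)⁻¹, ← Equiv.sum_comp (Equiv.inv (ZMod p)ˣ)]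
  simp only [Equiv.inv_apply, Units.val_inv_eq_inv_val, inv_pow, inv_inv]
  rw [FiniteField.sum_pow_units, ZMod.card, if_neg (Nat.not_dvd_of_pos_of_lt hd0 hd)]

theorem natCast_choose_pred_eq_neg_one_pow {m : ℕ} (hm : m < p) :
    ((p - 1).choose m : ZMod p) = (-1) ^ m := by
  -- `∑_{k ≤ m} (-1)^k C(p, k) = (-1)^m C(p-1, m)`, and only `k = 0` survives modulo `p`.
  have h := congrArg (Int.cast : ℤ → ZMod p)
    (Int.alternating_sum_range_choose_eq_choose (n := p - 1) (m := m))
  rw [Nat.sub_add_cancel (Fact.out : p.Prime).one_le, sum_range_succ'] at h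
  push_cast at h
  rw [sum_eq_zero fun k hk => ?_, Nat.choose_zero_right] at h
  · have hsq : ((-1 : ZMod p) ^ m) ^ 2 = 1 := by rw [← pow_mul, pow_mul', neg_one_sq, one_pow]
    linear_combination (-1) ^ m * h.symm - ((p - 1).choose m : ZMod p) * hsq
  · rw [(natCast_eq_zero_iff _ p).2 ((Fact.out : p.Prime).dvd_choose_self k.succ_ne_zero
      (by have := mem_range.1 hk; omega)), mul_zero]

theorem natCast_choose_div_pow_succ {k m : ℕ} (r : ℕ) (hk : k ∈ Icc 1 (p - 1))
    (hm : m ∈ Icc 1 (p - 1)) :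
    (k.choose m : ZMod p) / (k : ZMod p) ^ (r + 1) =
      ((k - 1).choose (m - 1) : ZMod p) / (k : ZMod p) ^ r / m := by
  have habsorb : (k : ZMod p) * ((k - 1).choose (m - 1) : ℕ) = (k.choose m : ℕ) * m := by
    have := Nat.add_one_mul_choose_eq (k - 1) (m - 1)
    rw [Nat.sub_add_cancel (mem_Icc.1 hk).1, Nat.sub_add_cancel (mem_Icc.1 hm).1] at this
    simpa only [Nat.cast_mul] using congrArg (Nat.cast : ℕ → ZMod p) this
  have hk0 := natCast_ne_zero_of_mem_Icc hk
  have hm0 := natCast_ne_zero_of_mem_Icc hm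
  field_simp
  linear_combination -(k : ZMod p) ^ r * habsorb

theorem sum_choose_div_pow_succ (r : ℕ) {m : ℕ} (hm : m ∈ Icc 1 (p - 1)) :
    ∑ k ∈ Icc 1 (p - 1), (k.choose m : ZMod p) / (k : ZMod p) ^ (r + 1) =
      (∑ k ∈ Icc 1 (p - 1), ((k - 1).choose (m - 1) : ZMod p) / (k : ZMod p) ^ r) / m := by
  rw [sum_div]
  exact sum_congr rfl fun k hk => natCast_choose_div_pow_succ r hk hm

theorem sum_one_sub_pow_div_pow_of_sum_choose {r : ℕ} (hr : r + 1 < p - 1)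
    (hA : ∀ m ∈ Icc 1 (p - 1), ∑ k ∈ Icc 1 (p - 1),
      ((k - 1).choose (m - 1) : ZMod p) / (k : ZMod p) ^ r = (-1) ^ m * harmonicStarTail p r m)
    (x : ZMod p) :
    ∑ k ∈ Icc 1 (p - 1), (1 - x) ^ k / (k : ZMod p) ^ (r + 1) =
      ∑ m ∈ Icc 1 (p - 1), x ^ m / m * harmonicStarTail p r m := by
  calc ∑ k ∈ Icc 1 (p - 1), (1 - x) ^ k / (k : ZMod p) ^ (r + 1)
      = ∑ m ∈ range (p - 1 + 1),
          (-x) ^ m * ∑ k ∈ Icc 1 (p - 1), (k.choose m : ZMod p) / (k : ZMod p) ^ (r + 1) := by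
        simp_rw [mul_sum]
        rw [sum_comm]
        refine sum_congr rfl fun k hk => ?_
        rw [one_sub_pow_eq_sum_range x (mem_Icc.1 hk).2, sum_div]
        simp_rw [mul_div_assoc]
    _ = ∑ m ∈ Icc 1 (p - 1),
          (-x) ^ m * ∑ k ∈ Icc 1 (p - 1), (k.choose m : ZMod p) / (k : ZMod p) ^ (r + 1) := by
        rw [range_eq_Ico, sum_eq_sum_Ico_succ_bot (by omega), Ico_add_one_right_eq_Icc]
        simp [sum_Icc_inv_pow_eq_zero r.succ_pos hr]
    _ = ∑ m ∈ Icc 1 (p - 1), x ^ m / m * harmonicStarTail p r m := by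
        refine sum_congr rfl fun m hm => ?_
        have hsign : (-x) ^ m * (-1) ^ m = x ^ m := by rw [← mul_pow, neg_mul_neg, mul_one]
        rw [sum_choose_div_pow_succ r hm, hA m hm]
        linear_combination harmonicStarTail p r m / m * hsign

theorem sum_choose_pred_div_pow {r : ℕ} (hr : r < p - 1) {m : ℕ} (hm : m ∈ Icc 1 (p - 1)) :
    ∑ k ∈ Icc 1 (p - 1), ((k - 1).choose (m - 1) : ZMod p) / (k : ZMod p) ^ r =
      (-1) ^ m * harmonicStarTail p r m := by
  induction r generalizing m with
  | zero =>
    simp only [pow_zero, div_one, harmonicStarTail_zero, mul_one]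
    rw [← Nat.cast_sum, Nat.sum_Icc_one_choose_pred, Nat.sub_add_cancel (mem_Icc.1 hm).1,
      natCast_choose_pred_eq_neg_one_pow (by have := (mem_Icc.1 hm).2; omega)]
  | succ r ih =>
    have hA := fun m (hm : m ∈ Icc 1 (p - 1)) => ih (by omega) hm
    obtain ⟨hm1, hmp⟩ := mem_Icc.1 hm
    induction m, hm1 using Nat.le_induction with
    | base =>
      have hS : harmonicStarTail p (r + 1) 1 = 0 := by
        have h := sum_one_sub_pow_div_pow_of_sum_choose hr hA 1
        rw [sub_self, sum_eq_zero fun k hk => by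
          rw [zero_pow (by have := (mem_Icc.1 hk).1; omega), zero_div]] at h
        rw [harmonicStarTail_succ, h]
        exact sum_congr rfl fun j _ => by ring
      simp [hS, sum_Icc_inv_pow_eq_zero r.succ_pos hr]
    | succ m hm1 ihm =>
      have hpascal : ∑ k ∈ Icc 1 (p - 1), ((k - 1).choose m : ZMod p) / (k : ZMod p) ^ (r + 1) =
          ∑ k ∈ Icc 1 (p - 1), (k.choose m : ZMod p) / (k : ZMod p) ^ (r + 1) -
            ∑ k ∈ Icc 1 (p - 1), ((k - 1).choose (m - 1) : ZMod p) / (k : ZMod p) ^ (r + 1) := by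
        rw [eq_sub_iff_add_eq, ← sum_add_distrib]
        refine sum_congr rfl fun k hk => ?_
        obtain ⟨k, rfl⟩ := Nat.exists_eq_add_of_le' (mem_Icc.1 hk).1
        obtain ⟨m, rfl⟩ := Nat.exists_eq_add_of_le' hm1
        rw [← add_div, Nat.choose_succ_succ']
        push_cast
        ring_nf
      rw [Nat.add_sub_cancel, hpascal, sum_choose_div_pow_succ r (mem_Icc.2 ⟨hm1, by omega⟩),
        hA m (mem_Icc.2 ⟨hm1, by omega⟩), ihm (mem_Icc.2 ⟨hm1, by omega⟩) (by omega),
        harmonicStarTail_succ_of_le (by omega)]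
      ring

theorem sum_one_sub_pow_div_pow {r : ℕ} (hr : r + 1 < p - 1) (x : ZMod p) :
    ∑ k ∈ Icc 1 (p - 1), (1 - x) ^ k / (k : ZMod p) ^ (r + 1) =
      ∑ m ∈ Icc 1 (p - 1), x ^ m / m * harmonicStarTail p r m :=
  sum_one_sub_pow_div_pow_of_sum_choose hr (fun _ hm => sum_choose_pred_div_pow (by omega) hm) x

theorem sum_Icc_sum_Icc_sum_Icc_pow_div (x : ZMod p) :
    ∑ k ∈ Icc 1 (p - 1), ∑ j ∈ Icc 1 k, ∑ i ∈ Icc 1 j, x ^ i / ((i : ZMod p) * j * k) =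
      ∑ i ∈ Icc 1 (p - 1), x ^ i / i * harmonicStarTail p 2 i := by
  rw [sum_Icc_sum_Icc_comm]
  simp_rw [sum_comm (s := Icc _ (p - 1)) (t := Icc 1 _)]
  rw [sum_Icc_sum_Icc_comm]
  simp only [harmonicStarTail_succ, harmonicStarTail_zero, mul_sum, sum_div]
  exact sum_congr rfl fun i _ => sum_congr rfl fun j _ => sum_congr rfl fun k _ => by ring

theorem sum_Icc_sum_Icc_sum_Icc_two_pow_sub_neg_one_pow_div (hp : 5 ≤ p) :
    ∑ k ∈ Icc 1 (p - 1), ∑ j ∈ Icc 1 k, ∑ i ∈ Icc 1 j,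
        ((2 : ZMod p) ^ i - (-1) ^ i) / ((i : ZMod p) * j * k) =
      ∑ k ∈ Icc 1 (p - 1), ((-1 : ZMod p) ^ k - 2 ^ k) / (k : ZMod p) ^ 3 := by
  have h x := (sum_Icc_sum_Icc_sum_Icc_pow_div x).trans
    (sum_one_sub_pow_div_pow (p := p) (r := 2) (by omega) x).symm
  simp_rw [sub_div, sum_sub_distrib]
  rw [h, h]
  norm_num

end ZMod

namespace Rat

/-- The cast `ℚ → ZMod p` sends `q` to `q.num / q.den`, which is additive and multiplicative only
on rationals whose denominator is prime to `p`. -/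
def HasResidue (p : ℕ) [Fact p.Prime] (q : ℚ) (a : ZMod p) : Prop :=
  (q.den : ZMod p) ≠ 0 ∧ (q : ZMod p) = a

namespace HasResidue

variable {p : ℕ} [Fact p.Prime] {q r : ℚ} {a b : ZMod p}

theorem natCast (n : ℕ) : HasResidue p n n := ⟨by simp, by simp⟩

theorem ofNat (n : ℕ) [n.AtLeastTwo] : HasResidue p ofNat(n) ofNat(n) := by
  simpa only [Nat.cast_ofNat] using natCast (p := p) ofNat(n)

theorem one : HasResidue p 1 1 := by simpa using natCast (p := p) 1

theorem neg (h : HasResidue p q a) : HasResidue p (-q) (-a) :=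
  ⟨by simpa using h.1, by rw [cast_neg, h.2]⟩

theorem add (hq : HasResidue p q a) (hr : HasResidue p r b) : HasResidue p (q + r) (a + b) :=
  ⟨ZMod.natCast_ne_zero_of_dvd (add_den_dvd q r) (by simpa using mul_ne_zero hq.1 hr.1),
    by rw [cast_add_of_ne_zero hq.1 hr.1, hq.2, hr.2]⟩

theorem mul (hq : HasResidue p q a) (hr : HasResidue p r b) : HasResidue p (q * r) (a * b) :=
  ⟨ZMod.natCast_ne_zero_of_dvd (mul_den_dvd q r) (by simpa using mul_ne_zero hq.1 hr.1),
    by rw [cast_mul_of_ne_zero hq.1 hr.1, hq.2, hr.2]⟩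

theorem sub (hq : HasResidue p q a) (hr : HasResidue p r b) : HasResidue p (q - r) (a - b) := by
  simpa only [sub_eq_add_neg] using hq.add hr.neg

theorem pow (h : HasResidue p q a) (n : ℕ) : HasResidue p (q ^ n) (a ^ n) := by
  induction n with
  | zero => simpa using one
  | succ n ih => simpa only [pow_succ] using ih.mul h

theorem sum {ι : Type*} {s : Finset ι} {f : ι → ℚ} {g : ι → ZMod p}
    (h : ∀ i ∈ s, HasResidue p (f i) (g i)) : HasResidue p (∑ i ∈ s, f i) (∑ i ∈ s, g i) := by
  classical
  induction s using Finset.induction_on with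
  | empty => simpa using natCast (p := p) 0
  | insert i s hi ih =>
    rw [sum_insert hi, sum_insert hi]
    exact (h i (mem_insert_self i s)).add (ih fun j hj => h j (mem_insert_of_mem hj))

theorem inv (h : HasResidue p q a) (ha : a ≠ 0) : HasResidue p q⁻¹ a⁻¹ := by
  have hnum : (q.num : ZMod p) ≠ 0 := by
    intro h0
    rw [← h.2, cast_def, h0, zero_div] at ha
    exact ha rfl
  have hq : q ≠ 0 := by
    rintro rfl
    simp at hnum
  refine ⟨?_, by rw [cast_inv_of_ne_zero hnum, h.2]⟩
  rw [den_inv_of_ne_zero hq, Ne, ZMod.natCast_eq_zero_iff, ← Int.natCast_dvd,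
    ← ZMod.intCast_zmod_eq_zero_iff_dvd]
  exact hnum

theorem div (hq : HasResidue p q a) (hr : HasResidue p r b) (hb : b ≠ 0) :
    HasResidue p (q / r) (a / b) := by
  simpa only [div_eq_mul_inv] using hq.mul (hr.inv hb)

theorem dvd_num (h : HasResidue p q 0) : (p : ℤ) ∣ q.num := by
  rw [← ZMod.intCast_zmod_eq_zero_iff_dvd]
  have h0 := h.2
  rw [cast_def, div_eq_zero_iff] at h0
  exact h0.resolve_right h.1

end HasResidue

end Rat

/-- For a prime `p > 3`,
`∑_{1 ≤ i ≤ j ≤ k ≤ p-1} (2^i - (-1)^i)/(i·j·k)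
  ≡ ∑_{k=1}^{p-1} ((-1)^k - 2^k)/k³ (mod p)`. -/
theorem stmt_10 (p : ℕ) (hp : p.Prime) (hp3 : 3 < p) :
    (p : ℤ) ∣
      ((∑ k ∈ Finset.Icc 1 (p - 1), ∑ j ∈ Finset.Icc 1 k, ∑ i ∈ Finset.Icc 1 j,
          ((2 : ℚ) ^ i - (-1 : ℚ) ^ i) / ((i : ℚ) * (j : ℚ) * (k : ℚ)))
        - ∑ k ∈ Finset.Icc 1 (p - 1),
            ((-1 : ℚ) ^ k - (2 : ℚ) ^ k) / (k : ℚ) ^ 3).num := by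
  have := Fact.mk hp
  have hp5 : 5 ≤ p := by
    by_contra h
    obtain rfl : p = 4 := by omega
    exact absurd hp (by decide)
  have hunit {k : ℕ} (hk : k ∈ Icc 1 (p - 1)) := ZMod.natCast_ne_zero_of_mem_Icc hk
  have hmem {a b : ℕ} (ha : a ∈ Icc 1 b) (hb : b ∈ Icc 1 (p - 1)) : a ∈ Icc 1 (p - 1) :=
    Icc_subset_Icc_right (mem_Icc.1 hb).2 ha
  have htwo : Rat.HasResidue p 2 2 := .ofNat 2
  have hneg : Rat.HasResidue p (-1) (-1) := .neg .one
  have hcast (n : ℕ) : Rat.HasResidue p n n := .natCast n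
  have htriple := Rat.HasResidue.sum fun k hk => .sum fun j hj => .sum fun i hi =>
    ((htwo.pow i).sub (hneg.pow i)).div (((hcast i).mul (hcast j)).mul (hcast k))
      (mul_ne_zero (mul_ne_zero (hunit (hmem hi (hmem hj hk))) (hunit (hmem hj hk))) (hunit hk))
  have hsingle := Rat.HasResidue.sum fun k hk =>
    ((hneg.pow k).sub (htwo.pow k)).div ((hcast k).pow 3) (pow_ne_zero 3 (hunit hk))
  have hdiff := htriple.sub hsingle
  rw [ZMod.sum_Icc_sum_Icc_sum_Icc_two_pow_sub_neg_one_pow_div hp5, sub_self] at hdiff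
  exact hdiff.dvd_num
end
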